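/- Iterating the stable most-significant-bit partition k times radix-sorts the bit-reversed values: applying, for ℓ = 1 to k, a stable partition by the ℓ-th most significant bit to a list of values in [0,2^k) yields the list sorted by the bit-reversal inv(·,k) of the values. -/

import Mathlib

/-!
After the first `i` partition steps the list is sorted by the number formed by the `i` most
significant bits of each value, read in reverse (bit `ℓ` having weight `2 ^ (ℓ - 1)`). Step
`i + 1` adds the next bit with weight `2 ^ i`, which exceeds every value of the old key, and
being a stable partition it keeps the old order within each block: this is one pass of an LSD
radix sort. After `k` steps the key is `natInv · k`.
-/

/-- `natInv c k` is the value whose `k`-bit representation is the reversal of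
that of `c`. -/
def natInv (c k : ℕ) : ℕ :=
  ∑ t ∈ Finset.range k, if c.testBit (k - 1 - t) then 2 ^ t else 0

/-- One stable partition step by bit `ℓ` (bits numbered 1 = most significant
to `k` = least significant): all values with bit `ℓ` equal to 0 first, in
order, then those with bit `ℓ` equal to 1, in order. -/
def msbStep (k ℓ : ℕ) (L : List ℕ) : List ℕ :=
  L.filter (fun v => !v.testBit (k - ℓ)) ++ L.filter (fun v => v.testBit (k - ℓ))

theorem List.pairwise_filter_not_append_filter {α : Type*} {L : List α} {f : α → ℕ} {c : ℕ}
    (p : α → Bool) (hf : ∀ a, f a < c) (h : L.Pairwise (fun a b => f a ≤ f b)) :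
    (L.filter (fun a => !p a) ++ L.filter p).Pairwise
      (fun a b => f a + (if p a then c else 0) ≤ f b + (if p b then c else 0)) := by
  rw [List.pairwise_append]
  refine ⟨(h.filter _).imp_of_mem ?_, (h.filter _).imp_of_mem ?_, ?_⟩
  · intro a b ha hb hab
    simp only [List.mem_filter, Bool.not_eq_true'] at ha hb
    simpa [ha.2, hb.2] using hab
  · intro a b ha hb hab
    simp only [List.mem_filter] at ha hb
    simpa [ha.2, hb.2] using hab
  · intro a ha b hb
    simp only [List.mem_filter, Bool.not_eq_true'] at ha hb
    simp only [ha.2, hb.2, Bool.false_eq_true, if_false, if_true]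
    have := hf a
    omega

def revTopBits (k i v : ℕ) : ℕ :=
  ∑ t ∈ Finset.range i, if v.testBit (k - 1 - t) then 2 ^ t else 0

theorem revTopBits_self (k v : ℕ) : revTopBits k k v = natInv v k := rfl

theorem revTopBits_succ (k i v : ℕ) :
    revTopBits k (i + 1) v = revTopBits k i v + (if v.testBit (k - 1 - i) then 2 ^ i else 0) :=
  Finset.sum_range_succ _ _

theorem revTopBits_lt (k i v : ℕ) : revTopBits k i v < 2 ^ i := by
  induction i with
  | zero => simp [revTopBits]
  | succ i ih =>
    rw [revTopBits_succ, pow_succ]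
    split <;> omega

theorem pairwise_msbStep (k i : ℕ) {L : List ℕ}
    (h : L.Pairwise (fun a b => revTopBits k i a ≤ revTopBits k i b)) :
    (msbStep k (i + 1) L).Pairwise
      (fun a b => revTopBits k (i + 1) a ≤ revTopBits k (i + 1) b) := by
  have hbit : k - (i + 1) = k - 1 - i := by omega
  simp only [msbStep, hbit, revTopBits_succ]
  exact List.pairwise_filter_not_append_filter _ (revTopBits_lt k i) h

theorem pairwise_foldl_msbStep (k j : ℕ) (L : List ℕ) :
    ((List.range j).foldl (fun acc i => msbStep k (i + 1) acc) L).Pairwise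
      (fun a b => revTopBits k j a ≤ revTopBits k j b) := by
  induction j with
  | zero => exact List.pairwise_of_forall fun a b => by simp [revTopBits]
  | succ j ih =>
    rw [List.range_succ, List.foldl_append, List.foldl_cons, List.foldl_nil]
    exact pairwise_msbStep k j ih

theorem msb_partitions_radix_sort_inv_general (k : ℕ) (L : List ℕ) :
    ((List.range k).foldl (fun acc i => msbStep k (i + 1) acc) L).Pairwise
      (fun a b => natInv a k ≤ natInv b k) := by
  simpa only [revTopBits_self] using pairwise_foldl_msbStep k k L

/-- Iterating the stable most-significant-bit partition for `ℓ = 1,…,k`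
radix-sorts the bit-reversed values: the result is sorted nondecreasingly by
`natInv · k`. -/
theorem msb_partitions_radix_sort_inv (k : ℕ) (L : List ℕ)
    (h : ∀ v ∈ L, v < 2 ^ k) :
    ((List.range k).foldl (fun acc i => msbStep k (i + 1) acc) L).Pairwise
      (fun a b => natInv a k ≤ natInv b k) :=
  msb_partitions_radix_sort_inv_general k L
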